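/- Let F/F_q be a function field with full constant field F_q, S ⊊ ℙ_F a nonempty set of places, H = ⋂_{P∈S} O_P the holomorphy ring, d ≥ 2, and Q_1, ..., Q_t distinct places in S. Then the density (Moore–Smith limit over positive divisors D supported outside S of |· ∩ L(D)^d| / q^{dℓ(D)}) of the set of monic degree-d coefficient tuples in H^d that are NOT Eisenstein at any of Q_1, ..., Q_t equals ∏_{i=1}^t (1 − (q^{deg(Q_i)} − 1)/q^{(d+1)deg(Q_i)}). -/

import Mathlib

/-- A model of an algebraic function field of one variable with full (finite) constant field
of cardinality `q`: a field `F`, a subfield `Fq` of constants with `q` elements, a family of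
normalized discrete valuations (the places), degrees of places, the genus, and the dimension
`ℓ(D)` of the Riemann–Roch space of a divisor, together with the standard facts about these
data (Riemann's theorem, `ℓ(D) ≤ deg D + 1`, `|L(D)| = q^{ℓ(D)}`, finiteness of zeros and
poles, and the zeta-function bound on the number of places of given degree). -/
structure FnField (q : ℕ) where
  /-- the function field -/
  F : Type
  [instField : Field F]
  /-- the field of constants -/
  Fq : Subfield F
  card_Fq : Nat.card Fq = q
  two_le_q : 2 ≤ q
  /-- the places -/
  Place : Type
  /-- the normalized additive valuation at each place (with junk value `0` at `0`) -/
  v : Place → F → ℤ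
  v_zero : ∀ P, v P 0 = 0
  v_mul : ∀ P (x y : F), x ≠ 0 → y ≠ 0 → v P (x * y) = v P x + v P y
  v_add : ∀ P (x y : F), x + y ≠ 0 → min (v P x) (v P y) ≤ v P (x + y)
  v_surj : ∀ P, ∃ x : F, x ≠ 0 ∧ v P x = 1
  v_const : ∀ P (c : Fq), (c : F) ≠ 0 → v P (c : F) = 0
  /-- a nonzero function has finitely many zeros and poles -/
  finite_supp : ∀ x : F, x ≠ 0 → {P : Place | v P x ≠ 0}.Finite
  /-- `Fq` is the full constant field -/
  full_const : ∀ x : F, x ≠ 0 → (∀ P, v P x = 0) → x ∈ Fq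
  /-- the degree of a place -/
  deg : Place → ℕ
  deg_pos : ∀ P, 0 < deg P
  /-- the genus -/
  genus : ℕ
  /-- the dimension `ℓ(D)` of the Riemann–Roch space `L(D)` over `Fq` -/
  ell : (Place →₀ ℤ) → ℕ
  /-- `L(D) = {f : v_P(f) ≥ -D(P) ∀P}` has exactly `q ^ ℓ(D)` elements -/
  card_RR : ∀ D : Place →₀ ℤ,
    Nat.card {f : F // f = 0 ∨ ∀ P, -(D P) ≤ v P f} = q ^ ell D
  /-- Riemann's theorem: `ℓ(D) = deg D + 1 - g` once `deg D ≥ 2g - 1` -/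
  riemann : ∀ D : Place →₀ ℤ,
    2 * (genus : ℤ) - 1 ≤ D.sum (fun P n => n * (deg P : ℤ)) →
    (ell D : ℤ) = D.sum (fun P n => n * (deg P : ℤ)) + 1 - genus
  /-- `ℓ(D) ≤ deg D + 1` for divisors of nonnegative degree -/
  ell_le : ∀ D : Place →₀ ℤ, 0 ≤ D.sum (fun P n => n * (deg P : ℤ)) →
    (ell D : ℤ) ≤ D.sum (fun P n => n * (deg P : ℤ)) + 1
  /-- the number of places of degree `n` is `O(q^n / n)` -/
  places_bound : ∃ c : ℝ, ∀ n : ℕ, 0 < n →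
    (Nat.card {P : Place // deg P = n} : ℝ) ≤ c * q ^ n / n

namespace FnField

variable {q : ℕ} (X : FnField q)

instance : Field X.F := X.instField

/-- the degree of a divisor -/
def degDiv (D : X.Place →₀ ℤ) : ℤ := D.sum fun P n => n * (X.deg P : ℤ)

/-- the Riemann–Roch space `L(D)` of a divisor `D` -/
def RR (D : X.Place →₀ ℤ) : Set X.F := {f | f = 0 ∨ ∀ P, -(D P) ≤ X.v P f}

/-- membership in (the maximal ideal of the holomorphy ring corresponding to) a place:
`x ∈ P` iff `v_P(x) ≥ 1`. -/
def mem1 (P : X.Place) (x : X.F) : Prop := x = 0 ∨ 1 ≤ X.v P x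

/-- membership in the square of (the maximal ideal corresponding to) a place:
`x ∈ P²` iff `v_P(x) ≥ 2`. -/
def mem2 (P : X.Place) (x : X.F) : Prop := x = 0 ∨ 2 ≤ X.v P x

/-- the holomorphy ring `H = ⋂_{P ∈ S} O_P` of a set of places `S` -/
def Hring (S : Set X.Place) : Set X.F := {x | ∀ P ∈ S, x = 0 ∨ 0 ≤ X.v P x}

/-- the directed set of positive divisors with support outside `S` -/
def Divisors (S : Set X.Place) : Type :=
  {D : X.Place →₀ ℤ // 0 ≤ D ∧ ∀ P ∈ D.support, P ∉ S}

noncomputable instance (S : Set X.Place) : Preorder (X.Divisors S) :=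
  Subtype.preorder _

end FnField

open FnField Filter

/-! Once `deg D ≥ 2g - 1 + 2 ∑ⱼ deg Qⱼ` the ratio already equals the limit. As `D` is supported
outside `S ∋ Qⱼ`, we have `L(D) ⊆ H`, and on `L(D)^d` the indicator of "not Eisenstein at `Qⱼ`" is
`1 - [all hᵢ ∈ Qⱼ] + [all hᵢ ∈ Qⱼ and h₀ ∈ Qⱼ²]`. Expanding the product over `j` writes the count as
a signed sum of sizes of boxes `∏ᵢ L(D - Eᵢ)` with `0 ≤ Eᵢ ≤ 2 ∑ⱼ Qⱼ`, and Riemann's theorem gives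
`ℓ(D - Eᵢ) = ℓ(D) - deg Eᵢ`. Hence every box has `q^{d ℓ(D)}` times a product of local factors,
and the sum factors as `q^{d ℓ(D)} ∏ⱼ (1 - q^{-d deg Qⱼ} + q^{-(d+1) deg Qⱼ})`. -/

theorem Fintype.sum_prod_sum_ite_eq_mul_prod {α ι κ R : Type*} [Fintype α] [Fintype ι]
    [DecidableEq ι] [Fintype κ] [CommSemiring R] (P : ι → κ → α → Prop)
    [∀ j k x, Decidable (P j k x)] (w : κ → R) (c : ι → κ → R) (N : R)
    (hP : ∀ σ : ι → κ, (Nat.card {x // ∀ j, P j (σ j) x} : R) = N * ∏ j, c j (σ j)) :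
    ∑ x, ∏ j, ∑ k, (if P j k x then w k else 0) = N * ∏ j, ∑ k, w k * c j k := by
  simp_rw [Fintype.prod_sum, Fintype.prod_ite_zero]
  rw [Finset.sum_comm, Finset.mul_sum]
  refine Finset.sum_congr rfl fun σ _ => ?_
  rw [← Finset.sum_filter, Finset.sum_const, nsmul_eq_mul, ← Fintype.card_subtype,
    ← Nat.card_eq_fintype_card, hP σ, Finset.prod_mul_distrib]
  ring

namespace FnField

variable {q : ℕ} (X : FnField q)

lemma q_ne_zero (X : FnField q) : q ≠ 0 := by
  have := X.two_le_q
  omega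

lemma degDiv_eq_linearCombination :
    X.degDiv = Finsupp.linearCombination ℤ fun P => (X.deg P : ℤ) := by
  ext D
  simp [degDiv, Finsupp.linearCombination_apply]

lemma degDiv_sub (D E : X.Place →₀ ℤ) : X.degDiv (D - E) = X.degDiv D - X.degDiv E := by
  rw [degDiv_eq_linearCombination, map_sub]

lemma degDiv_nonneg {D : X.Place →₀ ℤ} (hD : 0 ≤ D) : 0 ≤ X.degDiv D :=
  Finset.sum_nonneg fun P _ => mul_nonneg (hD P) (Int.natCast_nonneg _)

lemma degDiv_mono {D E : X.Place →₀ ℤ} (h : D ≤ E) : X.degDiv D ≤ X.degDiv E := by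
  have := X.degDiv_nonneg (sub_nonneg.mpr h)
  rw [degDiv_sub] at this
  linarith

lemma ell_sub_add_degDiv {D E : X.Place →₀ ℤ} (hE : 0 ≤ X.degDiv E)
    (h : 2 * (X.genus : ℤ) - 1 ≤ X.degDiv (D - E)) :
    (X.ell (D - E) : ℤ) + X.degDiv E = X.ell D := by
  have hDE := X.riemann (D - E) h
  have hD := X.riemann D (by rw [degDiv_sub] at h; change _ ≤ X.degDiv D; linarith)
  change _ = X.degDiv (D - E) + 1 - _ at hDE
  change _ = X.degDiv D + 1 - _ at hD
  rw [degDiv_sub] at hDE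
  linarith

lemma finite_RR (D : X.Place →₀ ℤ) : (X.RR D).Finite :=
  Nat.finite_of_card_ne_zero <| by
    rw [RR, Set.coe_ofPred, X.card_RR]
    exact pow_ne_zero _ X.q_ne_zero

lemma eventually_le_degDiv {S : Set X.Place} (hS : S ≠ Set.univ) (n : ℤ) :
    ∀ᶠ D : X.Divisors S in atTop, n ≤ X.degDiv D.1 := by
  obtain ⟨P₀, hP₀⟩ := (Set.ne_univ_iff_exists_notMem S).mp hS
  let D₀ : X.Divisors S := ⟨Finsupp.single P₀ n.toNat, Finsupp.single_nonneg.mpr (by positivity),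
    fun P hP => (Finset.mem_singleton.mp (Finsupp.support_single_subset hP)) ▸ hP₀⟩
  have hD₀ : n ≤ X.degDiv D₀.1 := by
    rw [degDiv_eq_linearCombination, Finsupp.linearCombination_single, smul_eq_mul]
    nlinarith [Int.self_le_toNat n, X.deg_pos P₀]
  filter_upwards [eventually_ge_atTop D₀] with D hD
  exact hD₀.trans (X.degDiv_mono hD)

def vanishesTo (P : X.Place) (n : ℕ) (f : X.F) : Prop := f = 0 ∨ (n : ℤ) ≤ X.v P f

lemma vanishesTo_zero_of_mem_RR {D : X.Place →₀ ℤ} {P : X.Place} {f : X.F} (hf : f ∈ X.RR D)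
    (hP : D P = 0) : X.vanishesTo P 0 f :=
  hf.imp_right fun h => by simpa [hP] using h P

lemma RR_subset_Hring {S : Set X.Place} {D : X.Place →₀ ℤ} (hDS : ∀ P ∈ D.support, P ∉ S) :
    X.RR D ⊆ X.Hring S := fun f hf P hP => by
  simpa [vanishesTo] using
    X.vanishesTo_zero_of_mem_RR hf (Finsupp.notMem_support_iff.mp fun h => hDS P h hP)

lemma mem_RR_sub_sum_single_iff {t : ℕ} {Q : Fin t → X.Place} (hQ : Function.Injective Q)
    {D : X.Place →₀ ℤ} (hDQ : ∀ j, D (Q j) = 0) (m : Fin t → ℕ) {f : X.F} :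
    f ∈ X.RR (D - ∑ j, Finsupp.single (Q j) (m j : ℤ)) ↔
      f ∈ X.RR D ∧ ∀ j, X.vanishesTo (Q j) (m j) f := by
  classical
  set E := ∑ j, Finsupp.single (Q j) (m j : ℤ)
  have hE : ∀ P, E P = ∑ j, if Q j = P then (m j : ℤ) else 0 := fun P => by
    simp only [E, Finsupp.finsetSum_apply, Finsupp.single_apply]
  have hEQ : ∀ j, E (Q j) = m j := fun j => by simp [hE, hQ.eq_iff]
  have hEout : ∀ P, (∀ j, Q j ≠ P) → E P = 0 := fun P hP => by simp [hE, hP]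
  rcases eq_or_ne f 0 with rfl | hf
  · simp [RR, vanishesTo]
  simp only [RR, vanishesTo, Set.mem_ofPred_eq, hf, false_or, Finsupp.sub_apply]
  constructor
  · intro h
    refine ⟨fun P => ?_, fun j => by simpa [hDQ j, hEQ j] using h (Q j)⟩
    have : 0 ≤ E P := by rw [hE]; exact Finset.sum_nonneg fun j _ => by split <;> positivity
    linarith [h P]
  · rintro ⟨hD, hQf⟩ P
    by_cases hP : ∃ j, Q j = P
    · obtain ⟨j, rfl⟩ := hP
      simpa [hDQ j, hEQ j] using hQf j
    · simpa [hEout P (not_exists.mp hP)] using hD P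

lemma card_RR_vanishesTo_mul {t : ℕ} {Q : Fin t → X.Place} (hQ : Function.Injective Q)
    {D : X.Place →₀ ℤ} (hDQ : ∀ j, D (Q j) = 0) (m : Fin t → ℕ)
    (hD : 2 * (X.genus : ℤ) - 1 + ∑ j, (m j : ℤ) * X.deg (Q j) ≤ X.degDiv D) :
    Nat.card {f // f ∈ X.RR D ∧ ∀ j, X.vanishesTo (Q j) (m j) f} *
      ∏ j, (q ^ X.deg (Q j)) ^ m j = q ^ X.ell D := by
  set E := ∑ j, Finsupp.single (Q j) (m j : ℤ)
  have hdegE : X.degDiv E = ∑ j, (m j : ℤ) * X.deg (Q j) := by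
    simp [E, degDiv_eq_linearCombination, Finsupp.linearCombination_single]
  have hell := X.ell_sub_add_degDiv (D := D) (E := E)
    (hdegE ▸ Finset.sum_nonneg fun j _ => by positivity) (by rw [degDiv_sub]; linarith)
  rw [hdegE] at hell
  have hcard : Nat.card {f // f ∈ X.RR D ∧ ∀ j, X.vanishesTo (Q j) (m j) f} = q ^ X.ell (D - E) :=
    (Nat.card_congr (Equiv.subtypeEquivRight fun f =>
      (X.mem_RR_sub_sum_single_iff hQ hDQ m).symm)).trans (X.card_RR _)
  have hsum : X.ell (D - E) + ∑ j, m j * X.deg (Q j) = X.ell D := by exact_mod_cast hell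
  rw [hcard, ← hsum, pow_add, ← Finset.prod_pow_eq_pow_sum]
  simp_rw [← pow_mul, mul_comm]

lemma card_pi_RR_vanishesTo_mul {d t : ℕ} {Q : Fin t → X.Place} (hQ : Function.Injective Q)
    {D : X.Place →₀ ℤ} (hDQ : ∀ j, D (Q j) = 0) (m : Fin t → Fin d → ℕ)
    (hD : ∀ i, 2 * (X.genus : ℤ) - 1 + ∑ j, (m j i : ℤ) * X.deg (Q j) ≤ X.degDiv D) :
    Nat.card {h : Fin d → X.F // ∀ i, h i ∈ X.RR D ∧ ∀ j, X.vanishesTo (Q j) (m j i) (h i)} *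
      ∏ j, (q ^ X.deg (Q j)) ^ ∑ i, m j i = q ^ (d * X.ell D) := by
  rw [Nat.card_congr (Equiv.subtypePiEquivPi
    (p := fun i f => f ∈ X.RR D ∧ ∀ j, X.vanishesTo (Q j) (m j i) f)), Nat.card_pi]
  simp_rw [← Finset.prod_pow_eq_pow_sum]
  rw [Finset.prod_comm, ← Finset.prod_mul_distrib]
  simp_rw [X.card_RR_vanishesTo_mul hQ hDQ _ (hD _)]
  rw [Finset.prod_const, Finset.card_univ, Fintype.card_fin, ← pow_mul, mul_comm]

lemma card_pi_RR_vanishesTo {d t : ℕ} {Q : Fin t → X.Place} (hQ : Function.Injective Q)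
    {D : X.Place →₀ ℤ} (hDQ : ∀ j, D (Q j) = 0) (m : Fin t → Fin d → ℕ)
    (hD : ∀ i, 2 * (X.genus : ℤ) - 1 + ∑ j, (m j i : ℤ) * X.deg (Q j) ≤ X.degDiv D) :
    (Nat.card {h : Fin d → X.F // ∀ i, h i ∈ X.RR D ∧ ∀ j, X.vanishesTo (Q j) (m j i) (h i)} : ℝ) =
      q ^ (d * X.ell D) * ∏ j, (((q : ℝ) ^ X.deg (Q j)) ^ ∑ i, m j i)⁻¹ := by
  have hq : (q : ℝ) ≠ 0 := Nat.cast_ne_zero.mpr X.q_ne_zero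
  rw [Finset.prod_inv_distrib, ← div_eq_mul_inv,
    eq_div_iff (Finset.prod_ne_zero_iff.mpr fun j _ => pow_ne_zero _ (pow_ne_zero _ hq))]
  exact_mod_cast X.card_pi_RR_vanishesTo_mul hQ hDQ m hD

lemma vanishesTo_mono {P : X.Place} {m n : ℕ} {f : X.F} (hf : X.vanishesTo P m f) (h : n ≤ m) :
    X.vanishesTo P n f :=
  hf.imp_right (le_trans (by exact_mod_cast h))

lemma mem1_iff_vanishesTo {P : X.Place} {f : X.F} : X.mem1 P f ↔ X.vanishesTo P 1 f := by
  simp [mem1, vanishesTo]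

lemma mem2_iff_vanishesTo {P : X.Place} {f : X.F} : X.mem2 P f ↔ X.vanishesTo P 2 f := by
  simp [mem2, vanishesTo]

def IsEisensteinAt {d : ℕ} (hd : 0 < d) (P : X.Place) (h : Fin d → X.F) : Prop :=
  (∀ i, X.mem1 P (h i)) ∧ ¬ X.mem2 P (h ⟨0, hd⟩)

/-- The terms `k = 0, 1, 2` of `1 - [all hᵢ ∈ P] + [all hᵢ ∈ P and h₀ ∈ P²]` ask each `hᵢ` to
vanish to order `eisOrder k i` at `P`. -/
def eisOrder {d : ℕ} (k : Fin 3) (i : Fin d) : ℕ := if i.val = 0 then k else min k 1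

lemma eisOrder_le_two {d : ℕ} (k : Fin 3) (i : Fin d) : eisOrder k i ≤ 2 := by
  unfold eisOrder
  split <;> omega

lemma sum_eisOrder {d : ℕ} (hd : 0 < d) (k : Fin 3) :
    ∑ i : Fin d, eisOrder k i = ![0, d, d + 1] k := by
  obtain ⟨d, rfl⟩ := Nat.exists_eq_add_of_lt hd
  fin_cases k <;> simp [Fin.sum_univ_succ, eisOrder]
  omega

open Classical in
lemma ite_not_isEisensteinAt {R : Type*} [Ring R] {d : ℕ} (hd : 0 < d) {P : X.Place}
    {h : Fin d → X.F} (hint : ∀ i, X.vanishesTo P 0 (h i)) :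
    (if ¬ X.IsEisensteinAt hd P h then 1 else 0 : R) =
      ∑ k : Fin 3, if ∀ i, X.vanishesTo P (eisOrder k i) (h i) then ![1, -1, 1] k else 0 := by
  have h0 : ∀ i, X.vanishesTo P (eisOrder 0 i) (h i) := by simpa [eisOrder] using hint
  have h1 : (∀ i, X.vanishesTo P (eisOrder 1 i) (h i)) ↔ ∀ i, X.mem1 P (h i) := by
    simp [eisOrder, mem1_iff_vanishesTo]
  have h2 : (∀ i, X.vanishesTo P (eisOrder 2 i) (h i)) ↔
      (∀ i, X.mem1 P (h i)) ∧ X.mem2 P (h ⟨0, hd⟩) := by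
    simp only [mem1_iff_vanishesTo, mem2_iff_vanishesTo]
    constructor
    · intro H
      exact ⟨fun i => X.vanishesTo_mono (H i) (by unfold eisOrder; split <;> simp),
        by simpa [eisOrder] using H ⟨0, hd⟩⟩
    · rintro ⟨hA, hB⟩ i
      by_cases hi : i.val = 0
      · obtain rfl : i = ⟨0, hd⟩ := Fin.ext hi
        simpa [eisOrder] using hB
      · simpa [eisOrder, hi] using hA i
  rw [Fin.sum_univ_three]
  by_cases hA : ∀ i, X.mem1 P (h i) <;> by_cases hB : X.mem2 P (h ⟨0, hd⟩) <;>
    simp [IsEisensteinAt, h0, h1, h2, hA, hB]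

lemma card_not_isEisensteinAt {d t : ℕ} (S : Set X.Place) (hd : 0 < d) {Q : Fin t → X.Place}
    (hQ : Function.Injective Q) (hQS : ∀ j, Q j ∈ S) {D : X.Place →₀ ℤ}
    (hDS : ∀ P ∈ D.support, P ∉ S)
    (hD : 2 * (X.genus : ℤ) - 1 + 2 * ∑ j, (X.deg (Q j) : ℤ) ≤ X.degDiv D) :
    (Nat.card {h : Fin d → X.F // (∀ i, h i ∈ X.Hring S) ∧
        (∀ j, ¬ X.IsEisensteinAt hd (Q j) h) ∧ ∀ i, h i ∈ X.RR D} : ℝ) =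
      q ^ (d * X.ell D) *
        ∏ j, (1 - ((q : ℝ) ^ X.deg (Q j) - 1) / (q : ℝ) ^ ((d + 1) * X.deg (Q j))) := by
  classical
  have hDQ : ∀ j, D (Q j) = 0 := fun j =>
    Finsupp.notMem_support_iff.mp fun h => hDS _ h (hQS j)
  have : Finite (X.RR D) := (X.finite_RR D).to_subtype
  let α := {h : Fin d → X.F // ∀ i, h i ∈ X.RR D}
  have : Finite α := .of_equiv _ (Equiv.subtypePiEquivPi (p := fun _ f => f ∈ X.RR D)).symm
  have : Fintype α := Fintype.ofFinite α
  have hpow (j : Fin t) :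
      (q : ℝ) ^ ((d + 1) * X.deg (Q j)) = ((q : ℝ) ^ X.deg (Q j)) ^ (d + 1) := by
    rw [mul_comm, pow_mul]
  calc (Nat.card {h : Fin d → X.F // (∀ i, h i ∈ X.Hring S) ∧
        (∀ j, ¬ X.IsEisensteinAt hd (Q j) h) ∧ ∀ i, h i ∈ X.RR D} : ℝ)
      = Nat.card {x : α // ∀ j, ¬ X.IsEisensteinAt hd (Q j) x.1} := by
        rw [Nat.card_congr (Equiv.subtypeSubtypeEquivSubtypeInter
          (fun h : Fin d → X.F => ∀ i, h i ∈ X.RR D) fun h => ∀ j, ¬ X.IsEisensteinAt hd (Q j) h)]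
        congr 1
        exact Nat.card_congr (Equiv.subtypeEquivRight fun h =>
          ⟨fun ⟨_, hE, hR⟩ => ⟨hR, hE⟩, fun ⟨hR, hE⟩ =>
            ⟨fun i => X.RR_subset_Hring hDS (hR i), hE, hR⟩⟩)
    _ = ∑ x : α, ∏ j, ∑ k : Fin 3,
          if ∀ i, X.vanishesTo (Q j) (eisOrder k i) (x.1 i) then ![1, -1, 1] k else 0 := by
        rw [Nat.card_eq_fintype_card, Fintype.card_subtype, Finset.natCast_card_filter]
        refine Finset.sum_congr rfl fun x _ => ?_
        rw [← Fintype.prod_congr _ _ fun j =>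
          X.ite_not_isEisensteinAt hd fun i => X.vanishesTo_zero_of_mem_RR (x.2 i) (hDQ j)]
        simp only [Fintype.prod_boole]
        congr
    _ = q ^ (d * X.ell D) * ∏ j, ∑ k : Fin 3,
          ![1, -1, 1] k * (((q : ℝ) ^ X.deg (Q j)) ^ ∑ i : Fin d, eisOrder k i)⁻¹ := by
        refine Fintype.sum_prod_sum_ite_eq_mul_prod _ _ _ _ fun σ => ?_
        rw [← X.card_pi_RR_vanishesTo hQ hDQ (fun j i => eisOrder (σ j) i) fun i => ?_]
        · congr 1
          refine Nat.card_congr ((Equiv.subtypeSubtypeEquivSubtypeInter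
            (fun h : Fin d → X.F => ∀ i, h i ∈ X.RR D)
            fun h => ∀ j i, X.vanishesTo (Q j) (eisOrder (σ j) i) (h i)).trans
            (Equiv.subtypeEquivRight fun h => ?_))
          exact ⟨fun ⟨hR, hV⟩ i => ⟨hR i, fun j => hV j i⟩,
            fun H => ⟨fun i => (H i).1, fun j i => (H i).2 j⟩⟩
        · calc _ ≤ 2 * (X.genus : ℤ) - 1 + ∑ j, 2 * (X.deg (Q j) : ℤ) := by
                gcongr with j
                exact_mod_cast eisOrder_le_two (σ j) i
            _ ≤ _ := by rwa [← Finset.mul_sum]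
    _ = _ := by
        refine congrArg _ (Finset.prod_congr rfl fun j _ => ?_)
        have ha : (q : ℝ) ^ X.deg (Q j) ≠ 0 := pow_ne_zero _ (Nat.cast_ne_zero.mpr X.q_ne_zero)
        simp [Fin.sum_univ_three, sum_eisOrder hd, hpow]
        field_simp
        ring

end FnField

/-- **Density of monic tuples that are not Eisenstein at any of `Q₁, …, Q_t` (Prop. 1).**
Let `F/F_q` be a function field with full constant field `F_q`, `S` a nonempty proper set of
places, `H` its holomorphy ring, `d ≥ 2`, and `Q₁, …, Q_t` distinct places in `S`.  A tuple
`(h₀,…,h_{d-1}) ∈ H^d` (the coefficients of `X^d + h_{d-1}X^{d-1} + ⋯ + h₀`) is Eisenstein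
at `Qⱼ` if `hᵢ ∈ Qⱼ` for all `i` and `h₀ ∉ Qⱼ²`.  The Moore–Smith limit, over positive
divisors `D` supported outside `S`, of `|{not Eisenstein at any Qⱼ} ∩ L(D)^d| / q^{d ℓ(D)}`
equals `∏ⱼ (1 - (q^{deg Qⱼ} - 1)/q^{(d+1) deg Qⱼ})`. -/
theorem density_not_locally_eisenstein_monic
    {q : ℕ} (X : FnField q) (S : Set X.Place)
    (hSne : S ≠ Set.univ)
    (d : ℕ) (hd : 2 ≤ d) (t : ℕ) (Q : Fin t → X.Place)
    (hQinj : Function.Injective Q) (hQS : ∀ j, Q j ∈ S) :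
    Filter.Tendsto
      (fun D : X.Divisors S =>
        ((Nat.card {h : Fin d → X.F //
            (∀ i, h i ∈ X.Hring S) ∧
            (∀ j : Fin t, ¬ ((∀ i, X.mem1 (Q j) (h i)) ∧
              ¬ X.mem2 (Q j) (h ⟨0, by omega⟩))) ∧
            (∀ i, h i ∈ X.RR D.1)}) : ℝ)
          / (q : ℝ) ^ (d * X.ell D.1))
      Filter.atTop
      (nhds (∏ j, (1 - ((q : ℝ) ^ X.deg (Q j) - 1) /
        (q : ℝ) ^ ((d + 1) * X.deg (Q j))))) := by
  refine tendsto_const_nhds.congr' ?_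
  filter_upwards [X.eventually_le_degDiv hSne (2 * X.genus - 1 + 2 * ∑ j, (X.deg (Q j) : ℤ))]
    with D hD
  rw [eq_div_iff (pow_ne_zero _ (Nat.cast_ne_zero.mpr X.q_ne_zero)), mul_comm]
  exact (X.card_not_isEisensteinAt S (by omega) hQinj hQS D.2.2 hD).symm
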